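/- arXiv:2002.04248 — 5 statements merged into one kernel-verified Lean document; each statement's English description precedes it below -/
import Mathlib

section
/- Let L be the lattice with Gram matrix [[2,0,0],[0,2,1],[0,1,2k+1]] (k ≥ 0), basis λ₁, λ₂, τ, of discriminant d = 2+8k. The isometry g fixing λ₁, λ₂ with g(τ) = λ₂ − τ acts as −1 on the discriminant group L∨/L. -/
/-- For the lattice [[2,0,0],[0,2,1],[0,1,2k+1]] (k ≥ 0), the isometry fixing
λ₁, λ₂ with τ ↦ λ₂ - τ acts as -1 on the discriminant group L∨/L. -/
theorem stmt_6 (k : ℤ) (kq : ℚ) (hq : kq = (k : ℚ)) (hk : 0 ≤ k) :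
    let G : Matrix (Fin 3) (Fin 3) ℚ := !![2,0,0;0,2,1;0,1,2*kq+1]
    let M : Matrix (Fin 3) (Fin 3) ℚ := !![1,0,0;0,1,1;0,0,-1]
    ∀ x : Fin 3 → ℚ,
      (∀ y : Fin 3 → ℤ, ∃ n : ℤ, dotProduct x (G.mulVec (fun i => (y i : ℚ))) = n) →
      ∃ z : Fin 3 → ℤ, M.mulVec x + x = fun i => (z i : ℚ) := by
  intro G M x hx
  obtain ⟨n0, h0⟩ := hx ![1, 0, 0]
  obtain ⟨n1, h1⟩ := hx ![0, 1, 0]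
  simp [G, dotProduct, Matrix.mulVec, Fin.sum_univ_three, Matrix.vecHead, Matrix.vecTail] at h0 h1
  refine ⟨![n0, n1, 0], ?_⟩
  funext i
  fin_cases i <;>
    simp [M, Matrix.mulVec, dotProduct, Fin.sum_univ_three] <;> push_cast <;> linarith
end

section
/- Let L be the lattice with Gram matrix [[2,0,1],[0,2,1],[1,1,2k+2]] (k ≥ 0), basis λ₁, λ₂, τ, of discriminant d = 4+8k. The isometry g fixing λ₁, λ₂ with g(τ) = λ₁ + λ₂ − τ acts as −1 on the discriminant group L∨/L. -/
theorem stmt_7_general (kq : ℚ) :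
    let G : Matrix (Fin 3) (Fin 3) ℚ := !![2,0,1;0,2,1;1,1,2*kq+2]
    let M : Matrix (Fin 3) (Fin 3) ℚ := !![1,0,1;0,1,1;0,0,-1]
    ∀ x : Fin 3 → ℚ,
      (∀ y : Fin 3 → ℤ, ∃ n : ℤ, dotProduct x (G.mulVec (fun i => (y i : ℚ))) = n) →
      ∃ z : Fin 3 → ℤ, M.mulVec x + x = fun i => (z i : ℚ) := by
  intro G M x hx
  -- `(g + 1) x = (⟪x, λ₁⟫, ⟪x, λ₂⟫, 0)`, and these pairings are integral on the dual lattice.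
  obtain ⟨a, ha⟩ := hx ![1, 0, 0]
  obtain ⟨b, hb⟩ := hx ![0, 1, 0]
  have ha : 2 * x 0 + x 2 = a := by
    simpa [G, dotProduct, Matrix.mulVec, Fin.sum_univ_three, mul_comm] using ha
  have hb : 2 * x 1 + x 2 = b := by
    simpa [G, dotProduct, Matrix.mulVec, Fin.sum_univ_three, mul_comm] using hb
  refine ⟨![a, b, 0], funext fun i => ?_⟩
  fin_cases i <;> simp [M, dotProduct, Fin.sum_univ_three] <;> linarith

/-- For the lattice [[2,0,1],[0,2,1],[1,1,2k+2]] (k ≥ 0), the isometry fixing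
λ₁, λ₂ with τ ↦ λ₁ + λ₂ - τ acts as -1 on the discriminant group L∨/L. -/
theorem stmt_7 (k : ℤ) (kq : ℚ) (hq : kq = (k : ℚ)) (hk : 0 ≤ k) :
    let G : Matrix (Fin 3) (Fin 3) ℚ := !![2,0,1;0,2,1;1,1,2*kq+2]
    let M : Matrix (Fin 3) (Fin 3) ℚ := !![1,0,1;0,1,1;0,0,-1]
    ∀ x : Fin 3 → ℚ,
      (∀ y : Fin 3 → ℤ, ∃ n : ℤ, dotProduct x (G.mulVec (fun i => (y i : ℚ))) = n) →
      ∃ z : Fin 3 → ℤ, M.mulVec x + x = fun i => (z i : ℚ) :=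
  stmt_7_general kq
end

section
/- Let d' be a positive integer. If d' ≡ 0, 2, or 4 mod 8 and every prime p ≡ 3 mod 4 divides d' to an even power, then there exist positive integers d, r with d' = d r², d ≡ 2 or 4 mod 8, and no prime ≡ 3 mod 4 divides d. -/
lemma stmt_9_aux (s : ℕ) : 0 < s → (∀ p : ℕ, p.Prime → p ∣ s → p % 4 = 1) →
    s % 4 = 1 := by
  induction s using Nat.strong_induction_on with
  | _ s ih =>
    intro hs h
    rcases eq_or_ne s 1 with rfl | h1
    · rfl
    · obtain ⟨p, hp, hpd⟩ := Nat.exists_prime_and_dvd h1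
      obtain ⟨k, rfl⟩ := hpd
      have hp2 := hp.two_le
      have hk : 0 < k := by
        rcases Nat.eq_zero_or_pos k with rfl | h
        · simp at hs
        · exact h
      have hkk : k < p * k := by nlinarith
      have hk4 := ih k hkk hk (fun q hq hqd => h q hq (hqd.mul_left p))
      have hp4 := h p hp ⟨k, rfl⟩
      rw [Nat.mul_mod, hp4, hk4]

/-- If d' ≡ 0, 2, 4 mod 8 and every prime p ≡ 3 mod 4 divides d' to an even
power, then d' = d·r² for some d ≡ 2 or 4 mod 8 not divisible by any prime
≡ 3 mod 4. -/
theorem stmt_9 (d' : ℕ) (hpos : 0 < d')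
    (hmod : d' % 8 = 0 ∨ d' % 8 = 2 ∨ d' % 8 = 4)
    (hsq : ∀ p : ℕ, p.Prime → p % 4 = 3 → Even (d'.factorization p)) :
    ∃ d r : ℕ, 0 < d ∧ 0 < r ∧ d' = d * r ^ 2 ∧ (d % 8 = 2 ∨ d % 8 = 4) ∧
      ∀ p : ℕ, p.Prime → p % 4 = 3 → ¬ p ∣ d := by
  obtain ⟨m, t, hfm, hsf⟩ := Nat.sq_mul_squarefree d'
  have hm0 : 0 < m := by
    rcases Nat.eq_zero_or_pos m with h | h
    · subst h; simp at hfm; omega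
    · exact h
  have ht0 : 0 < t := by
    rcases Nat.eq_zero_or_pos t with h | h
    · subst h; simp at hfm; omega
    · exact h
  have hm3 : ∀ p : ℕ, p.Prime → p % 4 = 3 → ¬ p ∣ m := by
    intro p hp hp4 hpd
    have he := hsq p hp hp4
    have hfac : d'.factorization p = 2 * t.factorization p + m.factorization p := by
      rw [← hfm, Nat.factorization_mul (pow_ne_zero 2 ht0.ne') hm0.ne',
        Nat.factorization_pow]
      simp
    have h1 : m.factorization p ≤ 1 := hsf.natFactorization_le_one p
    have h2 : 1 ≤ m.factorization p := (hp.factorization_pos_of_dvd hm0.ne' hpd)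
    rw [Nat.even_iff] at he
    omega
  rcases Nat.even_or_odd m with hme | hmo
  · -- m even : m = 2*s, d = m, r = t
    obtain ⟨s, hs⟩ : 2 ∣ m := even_iff_two_dvd.mp hme
    have hsodd : ¬ 2 ∣ s := by
      intro ⟨j, hj⟩
      have : (2*2) ∣ m := ⟨j, by omega⟩
      exact (Nat.squarefree_iff_prime_squarefree.mp hsf) 2 Nat.prime_two
        (by simpa [sq] using this)
    have hs4 : s % 4 = 1 := by
      apply stmt_9_aux s (by omega)
      intro p hp hpd
      have hpm : p ∣ m := hs ▸ hpd.mul_left 2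
      have hpo : p ≠ 2 := by rintro rfl; exact hsodd hpd
      have hodd : p % 2 = 1 := Nat.odd_iff.mp (hp.odd_of_ne_two hpo)
      have h3 := hm3 p hp
      omega
    refine ⟨m, t, hm0, ht0, by rw [← hfm]; ring, Or.inl (by omega), ?_⟩
    intro p hp hp4 hpd
    exact hm3 p hp hp4 hpd
  · -- m odd : t = 2u, d = 4*m, r = u
    have hmo2 : m % 2 = 1 := Nat.odd_iff.mp hmo
    have hd2 : 2 ∣ d' := by omega
    have h2t : 2 ∣ t := by
      have h2p : (2 : ℕ).Prime := Nat.prime_two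
      have h2 : 2 ∣ t ^ 2 * m := hfm ▸ hd2
      rcases h2p.dvd_mul.mp h2 with h | h
      · exact h2p.dvd_of_dvd_pow h
      · obtain ⟨j, hj⟩ := h; omega
    obtain ⟨u, rfl⟩ := h2t
    have hu0 : 0 < u := by omega
    have hm4 : m % 4 = 1 := by
      apply stmt_9_aux m hm0
      intro p hp hpd
      have hpo : p ≠ 2 := by
        rintro rfl; obtain ⟨j, hj⟩ := hpd; omega
      have hodd : p % 2 = 1 := Nat.odd_iff.mp (hp.odd_of_ne_two hpo)
      have h3 := hm3 p hp
      omega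
    refine ⟨4 * m, u, by omega, hu0, by rw [← hfm]; ring, Or.inr (by omega), ?_⟩
    intro p hp hp4 hpd
    have hpo : p ≠ 2 := by omega
    have hpm : p ∣ m := by
      rcases hp.dvd_mul.mp hpd with h | h
      · have h2 : p ∣ 2 := hp.dvd_of_dvd_pow ((by norm_num : (4:ℕ) = 2^2) ▸ h)
        exact absurd ((Nat.prime_dvd_prime_iff_eq hp Nat.prime_two).mp h2) hpo
      · exact h
    exact hm3 p hp hp4 hpm
end

section
/- Let L be a rank-3 positive definite lattice over ℤ with basis λ₁, λ₂, τ whose Gram matrix is one of [[2,0,0],[0,2,0],[0,0,2k]], [[2,0,0],[0,2,1],[0,1,2k+1]], or [[2,0,1],[0,2,1],[1,1,2k+2]] with k ≥ 1. Then the group of isometries of L fixing λ₁ and λ₂ is isomorphic to ℤ/2ℤ. -/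
/-!
An isometry fixing `λ₁` and `λ₂` is determined by the image `x λ₁ + y λ₂ + z τ` of `τ`. Its
determinant is `z`, so `z = ±1`, and preserving the products `λ₁ · τ = a`, `λ₂ · τ = b` gives
`2x + a z = a` and `2y + b z = b`. Hence `z = 1` forces the identity, while `z = -1` forces
`τ ↦ a λ₁ + b λ₂ - τ`, which is the reflection in `2τ - a λ₁ - b λ₂ ⊥ λ₁, λ₂` and so an isometry
of order two.
-/

open Matrix

namespace IsometryFixingPair

def gram (a b n : ℤ) : Matrix (Fin 3) (Fin 3) ℤ := !![2, 0, a; 0, 2, b; a, b, n]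

def fixingPair (x y z : ℤ) : Matrix (Fin 3) (Fin 3) ℤ := !![1, 0, x; 0, 1, y; 0, 0, z]

def reflection (a b : ℤ) : Matrix (Fin 3) (Fin 3) ℤ := fixingPair a b (-1)

lemma exists_eq_fixingPair_of_mulVec {M : Matrix (Fin 3) (Fin 3) ℤ}
    (h₁ : M *ᵥ ![1, 0, 0] = ![1, 0, 0]) (h₂ : M *ᵥ ![0, 1, 0] = ![0, 1, 0]) :
    ∃ x y z, M = fixingPair x y z := by
  have col₀ := congrFun h₁
  have col₁ := congrFun h₂
  simp only [mulVec, dotProduct, Fin.sum_univ_three, Fin.forall_fin_succ] at col₀ col₁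
  refine ⟨M 0 2, M 1 2, M 2 2, ?_⟩
  ext i j
  fin_cases i <;> fin_cases j <;> simp_all [fixingPair]

lemma fixingPair_mulVec (x y z : ℤ) :
    fixingPair x y z *ᵥ ![1, 0, 0] = ![1, 0, 0] ∧ fixingPair x y z *ᵥ ![0, 1, 0] = ![0, 1, 0] := by
  constructor <;> ext i <;> fin_cases i <;> simp [fixingPair, mulVec, dotProduct, Fin.sum_univ_three]

lemma det_fixingPair (x y z : ℤ) : (fixingPair x y z).det = z := by
  simp [fixingPair, det_fin_three]

lemma transpose_fixingPair (x y z : ℤ) :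
    (fixingPair x y z)ᵀ = !![1, 0, 0; 0, 1, 0; x, y, z] := by
  ext i j
  fin_cases i <;> fin_cases j <;> rfl

lemma fixingPair_transpose_mul_gram_mul (a b n x y z : ℤ) :
    (fixingPair x y z)ᵀ * gram a b n * fixingPair x y z =
      !![2, 0, 2 * x + a * z; 0, 2, 2 * y + b * z;
        2 * x + a * z, 2 * y + b * z, 2 * x ^ 2 + 2 * y ^ 2 + 2 * a * x * z + 2 * b * y * z + n * z ^ 2] := by
  rw [transpose_fixingPair]
  simp only [gram, fixingPair, mul_fin_three]
  congr 1
  ring_nf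

lemma reflection_isometry (a b n : ℤ) :
    (reflection a b)ᵀ * gram a b n * reflection a b = gram a b n := by
  rw [reflection, fixingPair_transpose_mul_gram_mul, gram]
  congr 1
  ring_nf

lemma reflection_ne_one (a b : ℤ) : reflection a b ≠ 1 := fun h => by
  simpa [reflection, fixingPair] using congrFun (congrFun h 2) 2

lemma reflection_mul_self (a b : ℤ) : reflection a b * reflection a b = 1 := by
  simp only [reflection, fixingPair, mul_fin_three, one_fin_three]
  congr 1
  ring_nf

theorem isometries_fixing_pair (a b n : ℤ) :
    {M : Matrix (Fin 3) (Fin 3) ℤ | IsUnit M.det ∧ Mᵀ * gram a b n * M = gram a b n ∧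
        M *ᵥ ![1, 0, 0] = ![1, 0, 0] ∧ M *ᵥ ![0, 1, 0] = ![0, 1, 0]} = {1, reflection a b} := by
  ext M
  simp only [Set.mem_ofPred_eq, Set.mem_insert_iff, Set.mem_singleton_iff]
  constructor
  · rintro ⟨hdet, hiso, h₁, h₂⟩
    obtain ⟨x, y, z, rfl⟩ := exists_eq_fixingPair_of_mulVec h₁ h₂
    rw [fixingPair_transpose_mul_gram_mul] at hiso
    have hx : 2 * x + a * z = a := by simpa [gram] using congrFun (congrFun hiso 0) 2
    have hy : 2 * y + b * z = b := by simpa [gram] using congrFun (congrFun hiso 1) 2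
    rcases Int.isUnit_iff.mp (det_fixingPair x y z ▸ hdet) with rfl | rfl
    · left
      rw [show x = 0 by omega, show y = 0 by omega, fixingPair, one_fin_three]
    · right
      rw [reflection, show x = a by omega, show y = b by omega]
  · rintro (rfl | rfl)
    · simp
    · refine ⟨?_, reflection_isometry a b n, fixingPair_mulVec a b (-1)⟩
      simp [reflection, det_fixingPair]

end IsometryFixingPair

open IsometryFixingPair in
theorem stmt_11_general (k : ℤ) (G : Matrix (Fin 3) (Fin 3) ℤ)
    (hG : G = !![2,0,0;0,2,0;0,0,2*k] ∨ G = !![2,0,0;0,2,1;0,1,2*k+1] ∨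
          G = !![2,0,1;0,2,1;1,1,2*k+2]) :
    ∃ M₀ : Matrix (Fin 3) (Fin 3) ℤ, M₀ ≠ 1 ∧ M₀ * M₀ = 1 ∧
      {M : Matrix (Fin 3) (Fin 3) ℤ | IsUnit M.det ∧ M.transpose * G * M = G ∧
        M.mulVec ![1,0,0] = ![1,0,0] ∧ M.mulVec ![0,1,0] = ![0,1,0]} = {1, M₀} := by
  obtain ⟨a, b, n, rfl⟩ : ∃ a b n, G = gram a b n := by
    rcases hG with rfl | rfl | rfl <;> exact ⟨_, _, _, rfl⟩
  exact ⟨reflection a b, reflection_ne_one a b, reflection_mul_self a b, isometries_fixing_pair a b n⟩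

/-- For each of the three possible Gram matrices of L_d, the group of
isometries fixing λ₁, λ₂ is isomorphic to ℤ/2ℤ: it consists of the identity
and one nontrivial involution. -/
theorem stmt_11 (k : ℤ) (hk : 1 ≤ k) (G : Matrix (Fin 3) (Fin 3) ℤ)
    (hG : G = !![2,0,0;0,2,0;0,0,2*k] ∨ G = !![2,0,0;0,2,1;0,1,2*k+1] ∨
          G = !![2,0,1;0,2,1;1,1,2*k+2]) :
    ∃ M₀ : Matrix (Fin 3) (Fin 3) ℤ, M₀ ≠ 1 ∧ M₀ * M₀ = 1 ∧
      {M : Matrix (Fin 3) (Fin 3) ℤ | IsUnit M.det ∧ M.transpose * G * M = G ∧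
        M.mulVec ![1,0,0] = ![1,0,0] ∧ M.mulVec ![0,1,0] = ![0,1,0]} = {1, M₀} :=
  stmt_11_general k G hG
end

section
/- Let k ≥ 0 and let L be the lattice ℤ³ with Gram matrix [[2,0,0],[0,2,1],[0,1,2k+1]], basis λ₁, λ₂, τ, and set d = 2+8k. Then the dual classes λ₁/2 and (λ₂ − 2τ)/(d/2) generate the discriminant group L∨/L, and L∨/L ≅ ℤ/2 × ℤ/(d/2). -/
/-!
Since `G` is symmetric, `x ⬝ G y = (x G) ⬝ y`, so `x ∈ L∨` exactly when `x G ∈ ℤ³`, i.e. `L∨ = ℤ³ G⁻¹`.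
The first coordinate splits off as `½ ℤ`. On the remaining block `[[2, 1], [1, 2k + 1]]` of
determinant `4k + 1`, the rows of its inverse are `((2k + 1), -1)/(4k + 1)` and `(-1, 2)/(4k + 1)`;
the second is `-v₂`, and the first is `(2k + 1) v₂ + (0, 1)`, so `v₂` alone generates this part
modulo `ℤ²`, with order `4k + 1`.
-/

open Matrix

theorem forall_dotProduct_mulVec_intCast_iff {n : Type*} [Fintype n] [DecidableEq n]
    (G : Matrix n n ℚ) (x : n → ℚ) :
    (∀ y : n → ℤ, ∃ m : ℤ, x ⬝ᵥ G *ᵥ (fun i => (y i : ℚ)) = m) ↔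
      ∀ j, ∃ m : ℤ, (x ᵥ* G) j = m := by
  simp only [dotProduct_mulVec]
  constructor
  · intro h j
    obtain ⟨m, hm⟩ := h (Pi.single j 1)
    refine ⟨m, ?_⟩
    simpa [dotProduct, Pi.single_apply] using hm
  · intro h y
    choose m hm using h
    exact ⟨∑ i, m i * y i, by simp [dotProduct, hm]⟩

theorem intCast_div_eq_intCast_iff {a n : ℤ} (hn : n ≠ 0) :
    (∃ m : ℤ, (a : ℚ) / n = m) ↔ n ∣ a := by
  constructor
  · rintro ⟨m, hm⟩
    refine ⟨m, ?_⟩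
    rw [div_eq_iff (by exact_mod_cast hn)] at hm
    exact_mod_cast (hm.trans (mul_comm _ _))
  · rintro ⟨m, rfl⟩
    exact ⟨m, by push_cast; field_simp⟩

theorem exists_intCast_eq_iff {n : Type*} (v : n → ℚ) :
    (∃ z : n → ℤ, v = fun i => (z i : ℚ)) ↔ ∀ i, ∃ m : ℤ, v i = m := by
  constructor
  · rintro ⟨z, rfl⟩ i
    exact ⟨z i, rfl⟩
  · intro h
    choose z hz using h
    exact ⟨z, funext hz⟩

namespace GramLattice

def gram (k : ℤ) : Matrix (Fin 3) (Fin 3) ℚ := !![2, 0, 0; 0, 2, 1; 0, 1, 2 * k + 1]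

def dual (k : ℤ) : Set (Fin 3 → ℚ) :=
  {x | ∀ y : Fin 3 → ℤ, ∃ n : ℤ, x ⬝ᵥ gram k *ᵥ (fun i => (y i : ℚ)) = n}

def gen₁ : Fin 3 → ℚ := ![1/2, 0, 0]

def gen₂ (k : ℤ) : Fin 3 → ℚ := ![0, 1/(4*k+1), -2/(4*k+1)]

theorem vecMul_gram (k : ℤ) (x : Fin 3 → ℚ) :
    x ᵥ* gram k = ![2 * x 0, 2 * x 1 + x 2, x 1 + (2 * k + 1) * x 2] := by
  ext j
  fin_cases j <;> simp [gram, vecMul, dotProduct, Fin.sum_univ_three] <;> ring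

theorem mem_dual_iff (k : ℤ) (x : Fin 3 → ℚ) :
    x ∈ dual k ↔ ∀ j, ∃ m : ℤ, (x ᵥ* gram k) j = m :=
  forall_dotProduct_mulVec_intCast_iff _ x

theorem four_mul_add_one_ne_zero (k : ℤ) : (4 * k + 1 : ℚ) ≠ 0 := by
  exact_mod_cast (show 4 * k + 1 ≠ 0 by omega)

theorem vecMul_gram_gen₁ (k : ℤ) : gen₁ ᵥ* gram k = ![1, 0, 0] := by
  rw [vecMul_gram]; simp [gen₁]

theorem vecMul_gram_gen₂ (k : ℤ) : gen₂ k ᵥ* gram k = ![0, 0, -1] := by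
  have := four_mul_add_one_ne_zero k
  rw [vecMul_gram]
  ext j
  fin_cases j <;> simp [gen₂] <;> field_simp <;> ring

theorem gen₁_mem_dual (k : ℤ) : gen₁ ∈ dual k := by
  rw [mem_dual_iff, vecMul_gram_gen₁]
  intro j
  fin_cases j
  exacts [⟨1, by simp⟩, ⟨0, by simp⟩, ⟨0, by simp⟩]

theorem gen₂_mem_dual (k : ℤ) : gen₂ k ∈ dual k := by
  rw [mem_dual_iff, vecMul_gram_gen₂]
  intro j
  fin_cases j
  exacts [⟨0, by simp⟩, ⟨0, by simp⟩, ⟨-1, by simp⟩]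

theorem exists_eq_smul_gen_add_smul_gen_add_intCast {k : ℤ} {x : Fin 3 → ℚ} (hx : x ∈ dual k) :
    ∃ a b : ℤ, ∃ z : Fin 3 → ℤ, x = a • gen₁ + b • gen₂ k + fun i => (z i : ℚ) := by
  have hD := four_mul_add_one_ne_zero k
  rw [mem_dual_iff] at hx
  obtain ⟨m, h0⟩ := hx 0
  obtain ⟨p, h1⟩ := hx 1
  obtain ⟨q, h2⟩ := hx 2
  simp only [vecMul_gram, cons_val_zero, cons_val_one, cons_val_two, Nat.succ_eq_add_one,
    Nat.reduceAdd, tail_cons, head_cons] at h0 h1 h2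
  -- invert the block [[2, 1], [1, 2k + 1]] of determinant 4k + 1
  have hx1 : x 1 = ((2 * k + 1) * p - q) / (4 * k + 1) := by
    rw [eq_div_iff hD]; linear_combination (2 * (k : ℚ) + 1) * h1 - h2
  have hx2 : x 2 = (2 * q - p) / (4 * k + 1) := by
    rw [eq_div_iff hD]; linear_combination -h1 + 2 * h2
  refine ⟨m, (2 * k + 1) * p - q, ![0, 0, p], ?_⟩
  ext j
  fin_cases j
  · simp [gen₁, gen₂]; linarith
  · simp [gen₁, gen₂, hx1]; field_simp
  · simp [gen₁, gen₂, hx2]; field_simp; ring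

theorem smul_gen₁_add_smul_gen₂ (k a b : ℤ) :
    a • gen₁ + b • gen₂ k = ![(a : ℚ) / 2, b / (4 * k + 1), -2 * (b / (4 * k + 1))] := by
  ext j
  fin_cases j <;> simp [gen₁, gen₂] <;> ring

theorem exists_intCast_eq_smul_gen_add_smul_gen_iff (k a b : ℤ) :
    (∃ z : Fin 3 → ℤ, a • gen₁ + b • gen₂ k = fun i => (z i : ℚ)) ↔ 2 ∣ a ∧ (4 * k + 1) ∣ b := by
  rw [exists_intCast_eq_iff, smul_gen₁_add_smul_gen₂, Fin.forall_fin_succ, Fin.forall_fin_two]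
  simp only [cons_val_zero, cons_val_succ, Fin.succ_one_eq_two]
  have h2 := intCast_div_eq_intCast_iff (a := a) (n := 2) two_ne_zero
  have hD := intCast_div_eq_intCast_iff (a := b) (show 4 * k + 1 ≠ 0 by omega)
  push_cast at h2 hD
  rw [← h2, ← hD]
  constructor
  · rintro ⟨ha, hb, -⟩
    exact ⟨ha, hb⟩
  · rintro ⟨ha, m, hm⟩
    exact ⟨ha, ⟨m, hm⟩, ⟨-2 * m, by rw [hm]; push_cast; ring⟩⟩

end GramLattice

theorem stmt_13_general (k : ℤ) (kq : ℚ) (hq : kq = (k : ℚ)) :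
    let G : Matrix (Fin 3) (Fin 3) ℚ := !![2,0,0;0,2,1;0,1,2*kq+1]
    let dual : Set (Fin 3 → ℚ) :=
      {x | ∀ y : Fin 3 → ℤ, ∃ n : ℤ, dotProduct x (G.mulVec (fun i => (y i : ℚ))) = n}
    let v₁ : Fin 3 → ℚ := ![1/2, 0, 0]
    let v₂ : Fin 3 → ℚ := ![0, 1/(4*kq+1), -2/(4*kq+1)]
    v₁ ∈ dual ∧ v₂ ∈ dual ∧
    (∀ x ∈ dual, ∃ a b : ℤ, ∃ z : Fin 3 → ℤ,
        x = a • v₁ + b • v₂ + fun i => (z i : ℚ)) ∧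
    (∀ a b : ℤ,
        (∃ z : Fin 3 → ℤ, a • v₁ + b • v₂ = fun i => (z i : ℚ)) ↔
          (2 ∣ a ∧ (4*k+1) ∣ b)) := by
  intro G dual v₁ v₂
  subst hq
  exact ⟨GramLattice.gen₁_mem_dual k, GramLattice.gen₂_mem_dual k,
    fun _ hx => GramLattice.exists_eq_smul_gen_add_smul_gen_add_intCast hx,
    GramLattice.exists_intCast_eq_smul_gen_add_smul_gen_iff k⟩

/-- For the lattice [[2,0,0],[0,2,1],[0,1,2k+1]] of discriminant d = 2+8k, the
classes of λ₁/2 and (λ₂-2τ)/(d/2) generate the discriminant group L∨/L, and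
L∨/L ≅ ℤ/2 × ℤ/(d/2). -/
theorem stmt_13 (k : ℤ) (kq : ℚ) (hq : kq = (k : ℚ)) (hk : 0 ≤ k) :
    let G : Matrix (Fin 3) (Fin 3) ℚ := !![2,0,0;0,2,1;0,1,2*kq+1]
    let dual : Set (Fin 3 → ℚ) :=
      {x | ∀ y : Fin 3 → ℤ, ∃ n : ℤ, dotProduct x (G.mulVec (fun i => (y i : ℚ))) = n}
    let v₁ : Fin 3 → ℚ := ![1/2, 0, 0]
    let v₂ : Fin 3 → ℚ := ![0, 1/(4*kq+1), -2/(4*kq+1)]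
    v₁ ∈ dual ∧ v₂ ∈ dual ∧
    (∀ x ∈ dual, ∃ a b : ℤ, ∃ z : Fin 3 → ℤ,
        x = a • v₁ + b • v₂ + fun i => (z i : ℚ)) ∧
    (∀ a b : ℤ,
        (∃ z : Fin 3 → ℤ, a • v₁ + b • v₂ = fun i => (z i : ℚ)) ↔
          (2 ∣ a ∧ (4*k+1) ∣ b)) :=
  stmt_13_general k kq hq
end
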